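/- arXiv:2402.01218 — 2 statements merged into one kernel-verified Lean document; each statement's English description precedes it below -/
import Mathlib

section
/- Let d ∈ ℕ, d ≥ 1, ρ a density matrix on ℂ^d, {P(f)}_{f∈Ω} a PVM on a nonempty finite set Ω, and U : ℝ → M_d(ℂ) a family of unitary matrices. Then for every n ∈ ℕ, all times t_1 < … < t_n, and all f⁺, f⁻ ∈ Ω^n, the quantum bi-probability is bounded by the geometric mean of the diagonal probabilities: |Q_{t_n,…,t_1}(f⁺,f⁻)| ≤ sqrt(P_{t_n,…,t_1}(f⁺)) · sqrt(P_{t_n,…,t_1}(f⁻)). -/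
open Matrix
open scoped ComplexOrder

/-- The Heisenberg-picture projection at time `t`: `P_t(f) = U(t)* P(f) U(t)`. -/
noncomputable def heisenbergProj {d : ℕ} {Ω : Type*}
    (P : Ω → Matrix (Fin d) (Fin d) ℂ) (U : ℝ → Matrix (Fin d) (Fin d) ℂ)
    (t : ℝ) (f : Ω) : Matrix (Fin d) (Fin d) ℂ :=
  (U t)ᴴ * P f * U t

/-- The quantum bi-probability
`Q_{t_n,…,t_1}(f⁺,f⁻) = tr[P_{t_n}(f_n⁺)⋯P_{t_1}(f_1⁺) ρ P_{t_1}(f_1⁻)⋯P_{t_n}(f_n⁻)]`,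
where indices `j : Fin n` are ordered so that `j = 0` corresponds to the earliest time `t_1`. -/
noncomputable def quantumBiProb {d : ℕ} {Ω : Type*}
    (ρ : Matrix (Fin d) (Fin d) ℂ) (P : Ω → Matrix (Fin d) (Fin d) ℂ)
    (U : ℝ → Matrix (Fin d) (Fin d) ℂ) {n : ℕ} (t : Fin n → ℝ)
    (fp fm : Fin n → Ω) : ℂ :=
  Matrix.trace
    ((List.ofFn fun j => heisenbergProj P U (t j) (fp j)).reverse.prod * ρ *
      (List.ofFn fun j => heisenbergProj P U (t j) (fm j)).prod)

/-!
With the history operator `C_f = P_{t_1}(f_1) ⋯ P_{t_n}(f_n)`, hermiticity of the projections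
turns the reversed product into `C_fᴴ`, so `Q(f⁺, f⁻) = tr (C_{f⁺}ᴴ ρ C_{f⁻})`. Since `ρ ≥ 0`,
`(A, B) ↦ tr (Aᴴ ρ B)` is a semi-inner product on matrices, and the bound is its
Cauchy–Schwarz inequality.
-/

namespace Matrix

theorem PosSemidef.norm_trace_conjTranspose_mul_mul_le {n 𝕜 : Type*} [Fintype n] [RCLike 𝕜]
    {M : Matrix n n 𝕜} (hM : M.PosSemidef) (A B : Matrix n n 𝕜) :
    ‖(Aᴴ * M * B).trace‖ ≤ √(RCLike.re (Aᴴ * M * A).trace) * √(RCLike.re (Bᴴ * M * B).trace) := by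
  let := M.toMatrixSeminormedAddCommGroup hM
  let := M.toMatrixInnerProductSpace hM
  -- Mathlib's inner product is `⟪x, y⟫ = tr (y M xᴴ)`, so we feed it `Aᴴ` and `Bᴴ`.
  have hnorm (C : Matrix n n 𝕜) : ‖Cᴴ‖ = √(RCLike.re (Cᴴ * M * C).trace) := by
    rw [norm_eq_sqrt_re_inner (𝕜 := 𝕜)]
    change √(RCLike.re (Cᴴ * M * Cᴴᴴ).trace) = _
    rw [conjTranspose_conjTranspose]
  have hinner : inner 𝕜 Bᴴ Aᴴ = (Aᴴ * M * B).trace := by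
    change (Aᴴ * M * Bᴴᴴ).trace = _
    rw [conjTranspose_conjTranspose]
  calc ‖(Aᴴ * M * B).trace‖ = ‖inner 𝕜 Bᴴ Aᴴ‖ := by rw [hinner]
    _ ≤ ‖Bᴴ‖ * ‖Aᴴ‖ := norm_inner_le_norm _ _
    _ = _ := by rw [hnorm, hnorm, mul_comm]

end Matrix

theorem List.prod_reverse_eq_conjTranspose_prod {m α : Type*} [Fintype m] [DecidableEq m]
    [Semiring α] [StarRing α] (l : List (Matrix m m α)) (hl : ∀ A ∈ l, A.IsHermitian) :
    l.reverse.prod = l.prodᴴ := by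
  rw [conjTranspose_list_prod, List.map_congr_left fun A hA => (hl A hA).eq, List.map_id']

section History

variable {d : ℕ} {Ω : Type*}

theorem isHermitian_heisenbergProj (P : Ω → Matrix (Fin d) (Fin d) ℂ)
    (U : ℝ → Matrix (Fin d) (Fin d) ℂ) (t : ℝ) {f : Ω} (hP : (P f).IsHermitian) :
    (heisenbergProj P U t f).IsHermitian :=
  isHermitian_conjTranspose_mul_mul (U t) hP

noncomputable def historyOperator (P : Ω → Matrix (Fin d) (Fin d) ℂ)
    (U : ℝ → Matrix (Fin d) (Fin d) ℂ) {n : ℕ} (t : Fin n → ℝ) (f : Fin n → Ω) :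
    Matrix (Fin d) (Fin d) ℂ :=
  (List.ofFn fun j => heisenbergProj P U (t j) (f j)).prod

theorem quantumBiProb_eq_trace_historyOperator (ρ : Matrix (Fin d) (Fin d) ℂ)
    {P : Ω → Matrix (Fin d) (Fin d) ℂ} (hP : ∀ f, (P f).IsHermitian)
    (U : ℝ → Matrix (Fin d) (Fin d) ℂ) {n : ℕ} (t : Fin n → ℝ) (fp fm : Fin n → Ω) :
    quantumBiProb ρ P U t fp fm =
      ((historyOperator P U t fp)ᴴ * ρ * historyOperator P U t fm).trace := by
  rw [quantumBiProb, historyOperator, List.prod_reverse_eq_conjTranspose_prod]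
  · rfl
  simp only [List.mem_ofFn, forall_exists_index]
  rintro _ j rfl
  exact isHermitian_heisenbergProj P U (t j) (hP (fp j))

end History

theorem quantumBiProb_abs_le_geom_mean_general {d : ℕ}
    {Ω : Type*}
    (ρ : Matrix (Fin d) (Fin d) ℂ) (hρ : ρ.PosSemidef)
    (P : Ω → Matrix (Fin d) (Fin d) ℂ)
    (hPsa : ∀ f, (P f).IsHermitian)
    (U : ℝ → Matrix (Fin d) (Fin d) ℂ)
    (n : ℕ) (t : Fin n → ℝ) (fp fm : Fin n → Ω) :
    ‖quantumBiProb ρ P U t fp fm‖ ≤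
      Real.sqrt (quantumBiProb ρ P U t fp fp).re *
        Real.sqrt (quantumBiProb ρ P U t fm fm).re := by
  simp only [quantumBiProb_eq_trace_historyOperator ρ hPsa]
  exact hρ.norm_trace_conjTranspose_mul_mul_le _ _

/-- the quantum bi-probability is bounded by the geometric mean of the
corresponding diagonal probabilities:
`|Q(f⁺,f⁻)| ≤ sqrt(P(f⁺)) · sqrt(P(f⁻))` where `P(f) = Q(f,f)` (a nonnegative real). -/
theorem quantumBiProb_abs_le_geom_mean {d : ℕ} (hd : 1 ≤ d)
    {Ω : Type*} [Fintype Ω] [Nonempty Ω] [DecidableEq Ω]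
    (ρ : Matrix (Fin d) (Fin d) ℂ) (hρ : ρ.PosSemidef) (hρtr : ρ.trace = 1)
    (P : Ω → Matrix (Fin d) (Fin d) ℂ)
    (hPsa : ∀ f, (P f).IsHermitian) (hPidem : ∀ f, P f * P f = P f)
    (hPorth : ∀ f f', f ≠ f' → P f * P f' = 0) (hPsum : ∑ f, P f = 1)
    (U : ℝ → Matrix (Fin d) (Fin d) ℂ)
    (hU : ∀ t, U t ∈ Matrix.unitaryGroup (Fin d) ℂ)
    (n : ℕ) (t : Fin n → ℝ) (ht : StrictMono t) (fp fm : Fin n → Ω) :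
    ‖quantumBiProb ρ P U t fp fm‖ ≤
      Real.sqrt (quantumBiProb ρ P U t fp fp).re *
        Real.sqrt (quantumBiProb ρ P U t fm fm).re :=
  quantumBiProb_abs_le_geom_mean_general ρ hρ P hPsa U n t fp fm
end

section
/- Let d ∈ ℕ, d ≥ 1, ρ a density matrix on ℂ^d, {P(f)}_{f∈Ω} a PVM on a nonempty finite set Ω, and U : ℝ → M_d(ℂ) a family of unitary matrices. Then for every n ∈ ℕ and all times t_1 < … < t_n, the ℓ¹-norm of the quantum bi-probability satisfies Σ_{f⁺,f⁻ ∈ Ω^n} |Q_{t_n,…,t_1}(f⁺,f⁻)| ≤ |Ω|^n, where |Ω| is the cardinality of Ω. -/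
open Matrix
open scoped ComplexOrder

/-!
With `W(f) = P_{t_n}(f_n) ⋯ P_{t_1}(f_1)`, the bi-probability `Q(f⁺, f⁻) = tr[W(f⁺) ρ W(f⁻)ᴴ]`
is the inner product of `W(f⁻)` and `W(f⁺)` for the semi-inner product `⟪X, Y⟫ = tr[Y ρ Xᴴ]`
induced by `ρ`. Since each `P_t` is a PVM, `∑_f W(f)ᴴ W(f)` telescopes to `1`, so
`∑_f ‖W(f)‖² = tr ρ = 1`. Cauchy–Schwarz in this inner product and then over the `|Ω|^n` paths
gives `∑ |Q| ≤ (∑_f ‖W(f)‖)² ≤ |Ω|^n`.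
-/

open Finset

theorem sum_ofFn_prod_mul_reverse_prod {R Ω : Type*} [Semiring R] [Fintype Ω] :
    ∀ {n : ℕ} (Q : Fin n → Ω → R), (∀ j f, Q j f * Q j f = Q j f) → (∀ j, ∑ f, Q j f = 1) →
      ∑ f : Fin n → Ω,
        (List.ofFn fun j => Q j (f j)).prod * (List.ofFn fun j => Q j (f j)).reverse.prod = 1
  | 0, _, _, _ => by simp
  | n + 1, Q, hidem, hsum => by
    rw [← (Fin.consEquiv fun _ => Ω).sum_comp, Fintype.sum_prod_type]
    simp only [Fin.consEquiv_apply, List.ofFn_succ, Fin.cons_zero, Fin.cons_succ,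
      List.prod_cons, List.reverse_cons, List.prod_append, List.prod_nil, mul_one]
    -- `∑ₐ Q₀ₐ (∑_g L_g R_g) Q₀ₐ = ∑ₐ Q₀ₐ Q₀ₐ = ∑ₐ Q₀ₐ = 1`, with `L_g R_g` the shorter paths
    simp_rw [← mul_assoc, ← sum_mul, mul_assoc (Q 0 _), ← mul_sum,
      sum_ofFn_prod_mul_reverse_prod (fun i => Q i.succ) (fun i => hidem i.succ)
        (fun i => hsum i.succ), mul_one, hidem, hsum]

theorem sum_sum_norm_inner_le_card_mul_sum_norm_sq {𝕜 E ι : Type*} [RCLike 𝕜]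
    [SeminormedAddCommGroup E] [InnerProductSpace 𝕜 E] [Fintype ι] (v : ι → E) :
    ∑ i, ∑ j, ‖inner 𝕜 (v i) (v j)‖ ≤ Fintype.card ι * ∑ i, ‖v i‖ ^ 2 :=
  calc ∑ i, ∑ j, ‖inner 𝕜 (v i) (v j)‖ ≤ ∑ i, ∑ j, ‖v i‖ * ‖v j‖ :=
        sum_le_sum fun i _ => sum_le_sum fun j _ => norm_inner_le_norm _ _
    _ = (∑ i, ‖v i‖) ^ 2 := by rw [sq, sum_mul_sum]
    _ ≤ Fintype.card ι * ∑ i, ‖v i‖ ^ 2 := sq_sum_le_card_mul_sum_sq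

namespace Matrix

variable {m : Type*} [Fintype m]

theorem conjTranspose_reverse_prod [DecidableEq m] {α : Type*} [Semiring α] [StarRing α]
    (l : List (Matrix m m α)) (hl : ∀ A ∈ l, A.IsHermitian) : l.reverse.prodᴴ = l.prod := by
  rw [conjTranspose_list_prod, List.map_reverse, List.reverse_reverse,
    List.map_congr_left hl, List.map_id']

theorem PosSemidef.sum_sum_norm_trace_mul_mul_conjTranspose_le {𝕜 ι : Type*} [RCLike 𝕜]
    [Fintype ι] {M : Matrix m m 𝕜} (hM : M.PosSemidef) (X : ι → Matrix m m 𝕜) :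
    ∑ i, ∑ j, ‖(X i * M * (X j)ᴴ).trace‖
      ≤ Fintype.card ι * ∑ i, RCLike.re (X i * M * (X i)ᴴ).trace := by
  let := M.toMatrixSeminormedAddCommGroup hM
  let := M.toMatrixInnerProductSpace hM
  calc ∑ i, ∑ j, ‖(X i * M * (X j)ᴴ).trace‖ = ∑ j, ∑ i, ‖inner 𝕜 (X j) (X i)‖ := sum_comm
    _ ≤ Fintype.card ι * ∑ i, ‖X i‖ ^ 2 := sum_sum_norm_inner_le_card_mul_sum_norm_sq X
    _ = Fintype.card ι * ∑ i, RCLike.re (X i * M * (X i)ᴴ).trace := by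
      simp_rw [← inner_self_eq_norm_sq (𝕜 := 𝕜)]
      rfl

end Matrix

section HeisenbergPicture

variable {d : ℕ} {Ω : Type*} {P : Ω → Matrix (Fin d) (Fin d) ℂ} {U : ℝ → Matrix (Fin d) (Fin d) ℂ}

theorem heisenbergProj_isHermitian (hP : ∀ f, (P f).IsHermitian) (t : ℝ) (f : Ω) :
    (heisenbergProj P U t f).IsHermitian := by
  simpa [heisenbergProj, Matrix.mul_assoc] using isHermitian_conjTranspose_mul_mul (U t) (hP f)

theorem heisenbergProj_mul_self (hP : ∀ f, P f * P f = P f) {t : ℝ}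
    (hU : U t ∈ unitaryGroup (Fin d) ℂ) (f : Ω) :
    heisenbergProj P U t f * heisenbergProj P U t f = heisenbergProj P U t f := by
  have hUU : U t * (U t)ᴴ = 1 := mem_unitaryGroup_iff.mp hU
  calc heisenbergProj P U t f * heisenbergProj P U t f
      = (U t)ᴴ * (P f * (U t * (U t)ᴴ) * P f) * U t := by
        simp only [heisenbergProj, Matrix.mul_assoc]
    _ = heisenbergProj P U t f := by rw [hUU, Matrix.mul_one, hP]; rfl

theorem sum_heisenbergProj [Fintype Ω] (hP : ∑ f, P f = 1) {t : ℝ}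
    (hU : U t ∈ unitaryGroup (Fin d) ℂ) : ∑ f, heisenbergProj P U t f = 1 := by
  simp only [heisenbergProj, ← sum_mul, ← mul_sum, hP, Matrix.mul_one]
  exact mem_unitaryGroup_iff'.mp hU

end HeisenbergPicture

section QuantumBiProb

variable {d : ℕ} {Ω : Type*} (P : Ω → Matrix (Fin d) (Fin d) ℂ)
  (U : ℝ → Matrix (Fin d) (Fin d) ℂ) {n : ℕ} (t : Fin n → ℝ)

/-- `P_{t_n}(f_n) ⋯ P_{t_1}(f_1)`. -/
noncomputable def heisenbergPathProd (f : Fin n → Ω) : Matrix (Fin d) (Fin d) ℂ :=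
  (List.ofFn fun j => heisenbergProj P U (t j) (f j)).reverse.prod

variable {P U}

theorem conjTranspose_heisenbergPathProd (hP : ∀ f, (P f).IsHermitian) (f : Fin n → Ω) :
    (heisenbergPathProd P U t f)ᴴ = (List.ofFn fun j => heisenbergProj P U (t j) (f j)).prod :=
  conjTranspose_reverse_prod _ fun _ hA => by
    obtain ⟨j, rfl⟩ := List.mem_ofFn.mp hA
    exact heisenbergProj_isHermitian hP _ _

theorem quantumBiProb_eq_trace (hP : ∀ f, (P f).IsHermitian) (ρ : Matrix (Fin d) (Fin d) ℂ)
    (fp fm : Fin n → Ω) :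
    quantumBiProb ρ P U t fp fm =
      (heisenbergPathProd P U t fp * ρ * (heisenbergPathProd P U t fm)ᴴ).trace := by
  rw [conjTranspose_heisenbergPathProd t hP]
  rfl

theorem sum_conjTranspose_heisenbergPathProd_mul_self [Fintype Ω]
    (hPsa : ∀ f, (P f).IsHermitian) (hPidem : ∀ f, P f * P f = P f) (hPsum : ∑ f, P f = 1)
    (hU : ∀ s, U s ∈ unitaryGroup (Fin d) ℂ) :
    ∑ f, (heisenbergPathProd P U t f)ᴴ * heisenbergPathProd P U t f = 1 := by
  simp_rw [conjTranspose_heisenbergPathProd t hPsa]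
  exact sum_ofFn_prod_mul_reverse_prod _ (fun j => heisenbergProj_mul_self hPidem (hU (t j)))
    fun j => sum_heisenbergProj hPsum (hU (t j))

theorem sum_trace_heisenbergPathProd_mul_mul_conjTranspose [Fintype Ω]
    (hPsa : ∀ f, (P f).IsHermitian) (hPidem : ∀ f, P f * P f = P f) (hPsum : ∑ f, P f = 1)
    (hU : ∀ s, U s ∈ unitaryGroup (Fin d) ℂ) (ρ : Matrix (Fin d) (Fin d) ℂ) :
    ∑ f, (heisenbergPathProd P U t f * ρ * (heisenbergPathProd P U t f)ᴴ).trace = ρ.trace := by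
  simp only [trace_mul_cycle (heisenbergPathProd P U t _), ← trace_sum, ← sum_mul,
    sum_conjTranspose_heisenbergPathProd_mul_self t hPsa hPidem hPsum hU, one_mul]

end QuantumBiProb

theorem quantumBiProb_l1_le_card_pow_general {d : ℕ}
    {Ω : Type*} [Fintype Ω]
    (ρ : Matrix (Fin d) (Fin d) ℂ) (hρ : ρ.PosSemidef) (hρtr : ρ.trace = 1)
    (P : Ω → Matrix (Fin d) (Fin d) ℂ)
    (hPsa : ∀ f, (P f).IsHermitian) (hPidem : ∀ f, P f * P f = P f)
    (hPsum : ∑ f, P f = 1)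
    (U : ℝ → Matrix (Fin d) (Fin d) ℂ)
    (hU : ∀ t, U t ∈ Matrix.unitaryGroup (Fin d) ℂ)
    (n : ℕ) (t : Fin n → ℝ) :
    ∑ fp : Fin n → Ω, ∑ fm : Fin n → Ω, ‖quantumBiProb ρ P U t fp fm‖
      ≤ (Fintype.card Ω : ℝ) ^ n := by
  set W := heisenbergPathProd P U t
  have hW : ∑ f, RCLike.re (W f * ρ * (W f)ᴴ).trace = 1 := by
    rw [← map_sum, sum_trace_heisenbergPathProd_mul_mul_conjTranspose t hPsa hPidem hPsum hU,
      hρtr, RCLike.one_re]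
  calc ∑ fp, ∑ fm, ‖quantumBiProb ρ P U t fp fm‖ = ∑ fp, ∑ fm, ‖(W fp * ρ * (W fm)ᴴ).trace‖ := by
        simp only [quantumBiProb_eq_trace t hPsa, W]
    _ ≤ Fintype.card (Fin n → Ω) * ∑ f, RCLike.re (W f * ρ * (W f)ᴴ).trace :=
        hρ.sum_sum_norm_trace_mul_mul_conjTranspose_le W
    _ = (Fintype.card Ω : ℝ) ^ n := by
      rw [hW, mul_one, Fintype.card_fun, Fintype.card_fin, Nat.cast_pow]

/-- the ℓ¹-norm of the quantum bi-probability is bounded by `|Ω|^n`. -/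
theorem quantumBiProb_l1_le_card_pow {d : ℕ} (hd : 1 ≤ d)
    {Ω : Type*} [Fintype Ω] [Nonempty Ω] [DecidableEq Ω]
    (ρ : Matrix (Fin d) (Fin d) ℂ) (hρ : ρ.PosSemidef) (hρtr : ρ.trace = 1)
    (P : Ω → Matrix (Fin d) (Fin d) ℂ)
    (hPsa : ∀ f, (P f).IsHermitian) (hPidem : ∀ f, P f * P f = P f)
    (hPorth : ∀ f f', f ≠ f' → P f * P f' = 0) (hPsum : ∑ f, P f = 1)
    (U : ℝ → Matrix (Fin d) (Fin d) ℂ)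
    (hU : ∀ t, U t ∈ Matrix.unitaryGroup (Fin d) ℂ)
    (n : ℕ) (t : Fin n → ℝ) (ht : StrictMono t) :
    ∑ fp : Fin n → Ω, ∑ fm : Fin n → Ω, ‖quantumBiProb ρ P U t fp fm‖
      ≤ (Fintype.card Ω : ℝ) ^ n :=
  quantumBiProb_l1_le_card_pow_general ρ hρ hρtr P hPsa hPidem hPsum U hU n t
end
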